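/- arXiv:2509.25444 — 2 statements merged into one kernel-verified Lean document; each statement's English description precedes it below -/
import Mathlib

section
/- Let S_1, …, S_n, S_{n+1} be exchangeable real-valued random variables. For α ∈ (0,1) with ⌈(n+1)(1-α)⌉ ≤ n, let q = S_{(⌈(n+1)(1-α)⌉)} be the corresponding order statistic of S_1,…,S_n. Then P(S_{n+1} ≤ q) ≥ 1 - α. -/
open MeasureTheory Set
open scoped ENNReal

lemma sorted_getD_lt (t : ℝ) : ∀ (l : List ℝ), l.Pairwise (· ≤ ·) → ∀ i, i < l.length →
    (l.getD i 0 < t ↔ i < l.countP (fun x => decide (x < t))) := by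
  intro l
  induction l with
  | nil => simp
  | cons a l ih =>
    intro hs i hi
    rw [List.pairwise_cons] at hs
    obtain ⟨ha, hs⟩ := hs
    rw [List.countP_cons]
    cases i with
    | zero =>
      simp only [List.getD_cons_zero]
      by_cases h : a < t
      · simp [h]
      · have hc : l.countP (fun x => decide (x < t)) = 0 := by
          rw [List.countP_eq_zero]
          intro b hb
          simpa using not_lt.2 (le_trans (not_lt.1 h) (ha b hb))
        simp [h, hc]
    | succ i =>
      simp only [List.getD_cons_succ]
      have hi' : i < l.length := by simpa using Nat.lt_of_succ_lt_succ hi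
      rw [ih hs i hi']
      by_cases h : a < t
      · simp [h]
      · have hc : l.countP (fun x => decide (x < t)) = 0 := by
          rw [List.countP_eq_zero]
          intro b hb
          simpa using not_lt.2 (le_trans (not_lt.1 h) (ha b hb))
        simp [h, hc]

lemma count_lemma {N : ℕ} (k : ℕ) (hk : k ≤ N) (x : Fin N → ℝ) :
    k ≤ (Finset.univ.filter fun j => (Finset.univ.filter fun i => x i < x j).card < k).card := by
  by_contra h
  push_neg at h
  set T := Finset.univ.filter fun j => (Finset.univ.filter fun i => x i < x j).card < k with hT
  have hTc : (Tᶜ : Finset (Fin N)).Nonempty := by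
    rw [← Finset.card_pos, Finset.card_compl]
    simp only [Fintype.card_fin]
    omega
  obtain ⟨j, hj, hjmin⟩ := (Tᶜ : Finset (Fin N)).exists_min_image x hTc
  have hsub : (Finset.univ.filter fun i => x i < x j) ⊆ T := by
    intro i hi
    simp only [Finset.mem_filter, Finset.mem_univ, true_and] at hi
    by_contra hiT
    have : i ∈ (Tᶜ : Finset (Fin N)) := Finset.mem_compl.2 hiT
    exact absurd hi (not_lt.2 (hjmin i this))
  have hjT : j ∈ T := by
    rw [hT]
    simp only [Finset.mem_filter, Finset.mem_univ, true_and]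
    exact lt_of_le_of_lt (Finset.card_le_card hsub) h
  exact (Finset.mem_compl.1 hj) hjT

/-- Split-conformal calibration: if `S_1, …, S_{n+1}` are exchangeable real random
variables, `α ∈ (0,1)`, `k = ⌈(n+1)(1-α)⌉ ≤ n`, and `q` is the `k`-th order statistic of
`S_1, …, S_n`, then `P(S_{n+1} ≤ q) ≥ 1 - α`. -/
theorem stmt14 {Ω : Type*} [MeasurableSpace Ω] (P : Measure Ω) [IsProbabilityMeasure P]
    (n : ℕ) (S : Fin (n + 1) → Ω → ℝ) (hS : ∀ i, Measurable (S i))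
    (hexch : ∀ σ : Equiv.Perm (Fin (n + 1)),
      Measure.map (fun ω i => S (σ i) ω) P = Measure.map (fun ω i => S i ω) P)
    (α : ℝ) (hα : α ∈ Set.Ioo (0 : ℝ) 1)
    (k : ℕ) (hk : k = ⌈((n : ℝ) + 1) * (1 - α)⌉₊) (hkn : k ≤ n)
    (q : Ω → ℝ)
    (hq : ∀ ω, q ω =
      ((((Finset.univ : Finset (Fin n)).val.map fun i => S (Fin.castSucc i) ω).sort
        (· ≤ ·)).getD (k - 1) 0)) :
    ENNReal.ofReal (1 - α) ≤ P {ω | S (Fin.last n) ω ≤ q ω} := by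
  obtain ⟨hα0, hα1⟩ := hα
  have hk1 : 1 ≤ k := by
    rw [hk]
    exact Nat.one_le_iff_ne_zero.2 (Nat.pos_iff_ne_zero.1
      (Nat.ceil_pos.2 (mul_pos (by positivity) (by linarith))))
  -- the events
  set A : Fin (n + 1) → Set Ω :=
    fun j => {ω | (Finset.univ.filter fun i => S i ω < S j ω).card < k} with hA_def
  have hmeasfun : ∀ j, Measurable fun ω =>
      ((Finset.univ.filter fun i => S i ω < S j ω).card : ℕ) := by
    intro j
    have heq : (fun ω => (Finset.univ.filter fun i => S i ω < S j ω).card)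
        = fun ω => ∑ i : Fin (n + 1), if S i ω < S j ω then 1 else 0 := by
      funext ω
      rw [Finset.card_filter]
    rw [heq]
    exact Finset.measurable_sum _ (fun i _ =>
      Measurable.ite (measurableSet_lt (hS i) (hS j)) measurable_const measurable_const)
  have hA : ∀ j, MeasurableSet (A j) := by
    intro j
    exact hmeasfun j (show MeasurableSet {m : ℕ | m < k} from MeasurableSpace.measurableSet_top)
  -- all events have equal probability
  set B : Set (Fin (n + 1) → ℝ) :=
    {x | (Finset.univ.filter fun i => x i < x (Fin.last n)).card < k} with hB_def
  have hB : MeasurableSet B := by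
    have hm : Measurable fun x : Fin (n + 1) → ℝ =>
        ((Finset.univ.filter fun i => x i < x (Fin.last n)).card : ℕ) := by
      have heq : (fun x : Fin (n + 1) → ℝ =>
          (Finset.univ.filter fun i => x i < x (Fin.last n)).card)
          = fun x => ∑ i : Fin (n + 1), if x i < x (Fin.last n) then 1 else 0 := by
        funext x
        rw [Finset.card_filter]
      rw [heq]
      exact Finset.measurable_sum _ (fun i _ =>
        Measurable.ite (measurableSet_lt (measurable_pi_apply i) (measurable_pi_apply _))
          measurable_const measurable_const)
    exact hm (show MeasurableSet {m : ℕ | m < k} from MeasurableSpace.measurableSet_top)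
  have hmapS : Measurable fun ω i => S i ω := measurable_pi_lambda _ hS
  have key : ∀ j, P (A j) = P (A (Fin.last n)) := by
    intro j
    set σ := Equiv.swap j (Fin.last n) with hσ
    have hmapσ : Measurable fun ω i => S (σ i) ω := measurable_pi_lambda _ (fun i => hS (σ i))
    have h1 : (fun ω i => S (σ i) ω) ⁻¹' B = A j := by
      ext ω
      simp only [Set.mem_preimage, hB_def, hA_def, Set.mem_setOf_eq]
      have hσlast : σ (Fin.last n) = j := Equiv.swap_apply_right _ _
      have hcard : ∀ t : ℝ, (Finset.univ.filter fun i => S (σ i) ω < t).card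
          = (Finset.univ.filter fun i => S i ω < t).card := by
        intro t
        apply Finset.card_bij (fun i _ => σ i)
        · intro a ha
          simp only [Finset.mem_filter, Finset.mem_univ, true_and] at ha ⊢
          exact ha
        · intro a _ b _ hab
          exact σ.injective hab
        · intro b hb
          refine ⟨σ.symm b, ?_, by simp⟩
          simp only [Finset.mem_filter, Finset.mem_univ, true_and] at hb ⊢
          simpa using hb
      simp only [hσlast, hcard]
    have h2 : (fun ω i => S i ω) ⁻¹' B = A (Fin.last n) := rfl
    calc P (A j) = Measure.map (fun ω i => S (σ i) ω) P B := by
          rw [Measure.map_apply hmapσ hB, h1]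
      _ = Measure.map (fun ω i => S i ω) P B := by rw [hexch σ]
      _ = P (A (Fin.last n)) := by rw [Measure.map_apply hmapS hB, h2]
  -- sum bound
  have hsum : (k : ℝ≥0∞) ≤ ∑ j : Fin (n + 1), P (A j) := by
    have hrw : ∑ j : Fin (n + 1), P (A j)
        = ∫⁻ ω, ∑ j : Fin (n + 1), (A j).indicator (fun _ => (1 : ℝ≥0∞)) ω ∂P := by
      rw [lintegral_finset_sum _ (fun j _ => (measurable_const.indicator (hA j)))]
      exact Finset.sum_congr rfl fun j _ => (lintegral_indicator_one (hA j)).symm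
    rw [hrw]
    have hpt : ∀ ω, (k : ℝ≥0∞) ≤ ∑ j : Fin (n + 1), (A j).indicator (fun _ => (1 : ℝ≥0∞)) ω := by
      intro ω
      have hc := count_lemma k (by omega) (fun i => S i ω)
      calc (k : ℝ≥0∞)
          ≤ ((Finset.univ.filter fun j : Fin (n + 1) =>
              (Finset.univ.filter fun i => S i ω < S j ω).card < k).card : ℝ≥0∞) := by
            exact_mod_cast hc
        _ = ∑ j : Fin (n + 1), (A j).indicator (fun _ => (1 : ℝ≥0∞)) ω := by
            rw [Finset.card_filter]
            push_cast
            congr 1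
            funext j
            by_cases h : ω ∈ A j
            · simp only [Set.indicator_of_mem h]
              simp [hA_def, Set.mem_setOf_eq] at h
              simp [h]
            · simp only [Set.indicator_of_notMem h]
              simp [hA_def, Set.mem_setOf_eq] at h
              simp [h]
    calc (k : ℝ≥0∞) = ∫⁻ _, (k : ℝ≥0∞) ∂P := by simp
      _ ≤ _ := lintegral_mono hpt
  have hfinal : (k : ℝ≥0∞) ≤ (n + 1 : ℝ≥0∞) * P (A (Fin.last n)) := by
    calc (k : ℝ≥0∞) ≤ ∑ j : Fin (n + 1), P (A j) := hsum
      _ = ∑ _j : Fin (n + 1), P (A (Fin.last n)) := Finset.sum_congr rfl (fun j _ => key j)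
      _ = (n + 1 : ℝ≥0∞) * P (A (Fin.last n)) := by
          rw [Finset.sum_const, Finset.card_univ, Fintype.card_fin, nsmul_eq_mul]
          push_cast
          ring
  -- identify the event
  have hset : {ω | S (Fin.last n) ω ≤ q ω} = A (Fin.last n) := by
    ext ω
    simp only [Set.mem_setOf_eq, hA_def]
    rw [hq ω]
    set t := S (Fin.last n) ω with ht
    set m : Multiset ℝ := (Finset.univ : Finset (Fin n)).val.map
      (fun i => S (Fin.castSucc i) ω) with hm
    set l := m.sort (· ≤ ·) with hl_def
    have hl : l.Pairwise (· ≤ ·) := Multiset.pairwise_sort _ _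
    have hlen : l.length = n := by
      rw [hl_def, Multiset.length_sort, hm, Multiset.card_map]
      simp
    have hi : k - 1 < l.length := by omega
    have hcount : l.countP (fun x => decide (x < t))
        = (Finset.univ.filter fun i : Fin (n + 1) => S i ω < t).card := by
      have h1 : l.countP (fun x => decide (x < t)) = m.countP (fun x => decide (x < t)) := by
        conv_rhs => rw [← Multiset.sort_eq m (· ≤ ·)]
        rw [Multiset.coe_countP]
        simp [hl_def]
      rw [h1, hm, Multiset.countP_map]
      have h2 : (Finset.univ.filter fun i : Fin (n + 1) => S i ω < t).card
          = (Finset.univ.filter fun i : Fin n => S (Fin.castSucc i) ω < t).card := by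
        rw [Finset.card_filter, Finset.card_filter, Fin.sum_univ_castSucc]
        simp [ht]
      rw [h2, Finset.card_def, Finset.filter_val]
      exact congrArg Multiset.card (Multiset.filter_congr fun x _ => by simp)
    constructor
    · intro hle
      have : ¬ (l.getD (k - 1) 0 < t) := not_lt.2 hle
      rw [sorted_getD_lt t l hl (k - 1) hi] at this
      rw [hcount] at this
      omega
    · intro hlt
      rw [← hcount] at hlt
      have : ¬ ((k - 1) < l.countP (fun x => decide (x < t))) := by omega
      rw [← sorted_getD_lt t l hl (k - 1) hi] at this
      exact not_lt.1 this
  rw [hset]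
  -- arithmetic conclusion
  have harith : (n + 1 : ℝ≥0∞) * ENNReal.ofReal (1 - α) ≤ (n + 1 : ℝ≥0∞) * P (A (Fin.last n)) := by
    refine le_trans ?_ hfinal
    have h1 : ((n : ℝ) + 1) * (1 - α) ≤ (k : ℝ) := by
      rw [hk]
      exact Nat.le_ceil _
    calc (n + 1 : ℝ≥0∞) * ENNReal.ofReal (1 - α)
        = ENNReal.ofReal (((n : ℝ) + 1) * (1 - α)) := by
          rw [ENNReal.ofReal_mul (by positivity)]
          congr 1
          rw [ENNReal.ofReal_add (by positivity) zero_le_one]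
          simp [ENNReal.ofReal_natCast]
      _ ≤ ENNReal.ofReal (k : ℝ) := ENNReal.ofReal_le_ofReal h1
      _ = (k : ℝ≥0∞) := ENNReal.ofReal_natCast k
  exact (ENNReal.mul_le_mul_iff_right (by simp) (by simp)).1 harith
end

section
/- Let (X_i, Y_i), i = 1,…,n+1, be exchangeable random pairs, let s : 𝒴 × 𝒳 → ℝ be a fixed measurable score function, and set S_i = s(Y_i, X_i). For α ∈ (0,1), define q as the ⌈(n+1)(1-α)⌉-th smallest value among S_1,…,S_n (with q = +∞ if ⌈(n+1)(1-α)⌉ > n), and the prediction set Ĉ(x) = {y : s(y,x) ≤ q}. Then P(Y_{n+1} ∈ Ĉ(X_{n+1})) ≥ 1 - α. -/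
section ConformalAux
open Finset

open Finset

lemma rank_strict_mono {m : ℕ} (v : Fin m → ℝ) {j j' : Fin m}
    (h : v j < v j' ∨ (v j = v j' ∧ j < j')) :
    (univ.filter fun i => v i < v j ∨ (v i = v j ∧ i < j)).card <
      (univ.filter fun i => v i < v j' ∨ (v i = v j' ∧ i < j')).card := by
  apply Finset.card_lt_card
  constructor
  · intro i hi
    simp only [mem_filter, mem_univ, true_and] at hi ⊢
    rcases hi with hi | ⟨hi, hij⟩
    · rcases h with h | ⟨h, _⟩
      · exact Or.inl (hi.trans h)
      · exact Or.inl (h ▸ hi)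
    · rcases h with h | ⟨h, hjj⟩
      · exact Or.inl (hi ▸ h)
      · exact Or.inr ⟨hi.trans h, hij.trans hjj⟩
  · intro hsub
    have hj : j ∈ univ.filter fun i => v i < v j' ∨ (v i = v j' ∧ i < j') := by
      simp only [mem_filter, mem_univ, true_and]; exact h
    have := hsub hj
    simp only [mem_filter, mem_univ, true_and] at this
    rcases this with h1 | h1 <;> simp at h1

lemma conformal_count_ge {m : ℕ} (v : Fin m → ℝ) (k : ℕ) (hk : k ≤ m) :
    k ≤ (univ.filter fun j => (univ.filter fun i => v i < v j).card < k).card := by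
  set r : Fin m → ℕ := fun j => (univ.filter fun i => v i < v j ∨ (v i = v j ∧ i < j)).card with hr
  have hrlt : ∀ j, r j < m := by
    intro j
    have : (univ.filter fun i => v i < v j ∨ (v i = v j ∧ i < j)) ⊂ univ := by
      rw [Finset.ssubset_univ_iff]
      intro hEq
      have : j ∈ univ.filter fun i => v i < v j ∨ (v i = v j ∧ i < j) := by rw [hEq]; exact mem_univ j
      simp only [mem_filter, mem_univ, true_and] at this
      rcases this with h | h <;> simp at h
    simpa using Finset.card_lt_card this
  set r' : Fin m → Fin m := fun j => ⟨r j, hrlt j⟩ with hr'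
  have hinj : Function.Injective r' := by
    intro a b hab
    by_contra hne
    have key : ∀ x y : Fin m, (v x < v y ∨ (v x = v y ∧ x < y)) → r x ≠ r y := by
      intro x y h
      exact Nat.ne_of_lt (rank_strict_mono v h)
    have hrab : r a = r b := congrArg Fin.val hab
    rcases lt_trichotomy (v a) (v b) with h | h | h
    · exact key a b (Or.inl h) hrab
    · rcases lt_trichotomy a b with h2 | h2 | h2
      · exact key a b (Or.inr ⟨h, h2⟩) hrab
      · exact hne h2
      · exact key b a (Or.inr ⟨h.symm, h2⟩) hrab.symm
    · exact key b a (Or.inl h) hrab.symm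
  have hsurj : Function.Surjective r' := Finite.surjective_of_injective hinj
  -- card of {j | r j < k} = k
  have hsub : (univ.filter fun j => r j < k) ⊆ (univ.filter fun j => (univ.filter fun i => v i < v j).card < k) := by
    intro j hj
    simp only [mem_filter, mem_univ, true_and] at hj ⊢
    refine lt_of_le_of_lt ?_ hj
    apply Finset.card_le_card
    intro i hi
    simp only [mem_filter, mem_univ, true_and] at hi ⊢
    exact Or.inl hi
  refine le_trans ?_ (Finset.card_le_card hsub)
  have himg : (univ.filter fun j => r j < k).image r' = univ.filter fun x : Fin m => (x : ℕ) < k := by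
    ext x
    simp only [mem_image, mem_filter, mem_univ, true_and]
    constructor
    · rintro ⟨a, ha, rfl⟩; exact ha
    · intro hx
      obtain ⟨a, rfl⟩ := hsurj x
      exact ⟨a, hx, rfl⟩
  have hcard : (univ.filter fun x : Fin m => (x : ℕ) < k).card = k := by
    have : (univ.filter fun x : Fin m => (x : ℕ) < k) =
        (Finset.range k).attachFin (fun a ha => lt_of_lt_of_le (Finset.mem_range.mp ha) hk) := by
      ext x
      simp [Finset.mem_attachFin]
    rw [this, Finset.card_attachFin, Finset.card_range]
  calc k = ((univ.filter fun j => r j < k).image r').card := by rw [himg, hcard]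
    _ ≤ (univ.filter fun j => r j < k).card := Finset.card_image_le

lemma sorted_get_lt_iff {x : ℝ} : ∀ {L : List ℝ}, L.Pairwise (· ≤ ·) →
    ∀ i (hi : i < L.length), (L.get ⟨i, hi⟩ < x ↔ i < L.countP (fun a => decide (a < x))) := by
  intro L
  induction L with
  | nil => intro _ i hi; simp at hi
  | cons a L' ih =>
    intro hL i hi
    have hL' : L'.Pairwise (· ≤ ·) := hL.of_cons
    have ha : ∀ b ∈ L', a ≤ b := fun b hb => (List.pairwise_cons.mp hL).1 b hb
    by_cases hax : a < x
    · have hcnt : (a :: L').countP (fun a => decide (a < x)) = L'.countP (fun a => decide (a < x)) + 1 := by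
        rw [List.countP_cons]; simp [hax]
      cases i with
      | zero => simp [hax, hcnt]
      | succ j =>
        have hj : j < L'.length := by simpa using hi
        have := ih hL' j hj
        simp only [List.get_cons_succ, hcnt]
        rw [this]
        omega
    · have hall : ∀ b ∈ L', ¬ b < x := fun b hb h => hax (lt_of_le_of_lt (ha b hb) h)
      have hcnt : (a :: L').countP (fun a => decide (a < x)) = 0 := by
        rw [List.countP_eq_zero]
        intro b hb
        rcases List.mem_cons.mp hb with rfl | hb
        · simpa using hax
        · simpa using hall b hb
      rw [hcnt]
      cases i with
      | zero => simpa using hax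
      | succ j =>
        have hj : j < L'.length := by simpa using hi
        simp only [List.get_cons_succ]
        constructor
        · intro h; exact absurd h (hall _ (List.get_mem _ _))
        · omega

end ConformalAux

open MeasureTheory Set
open scoped ENNReal



/-- Split conformal prediction: with exchangeable pairs `(X_i, Y_i)`, a measurable score
`s`, scores `S_i = s(Y_i, X_i)`, `q` the `⌈(n+1)(1-α)⌉`-th smallest of `S_1,…,S_n`
(`q = +∞` if `⌈(n+1)(1-α)⌉ > n`), and `Ĉ(x) = {y : s(y,x) ≤ q}`, we have
`P(Y_{n+1} ∈ Ĉ(X_{n+1})) ≥ 1 - α`. -/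
theorem stmt15 {Ω 𝒳 𝒴 : Type*} [MeasurableSpace Ω] [MeasurableSpace 𝒳] [MeasurableSpace 𝒴]
    (P : Measure Ω) [IsProbabilityMeasure P]
    (n : ℕ) (Z : Fin (n + 1) → Ω → 𝒳 × 𝒴) (hZ : ∀ i, Measurable (Z i))
    (hexch : ∀ σ : Equiv.Perm (Fin (n + 1)),
      Measure.map (fun ω i => Z (σ i) ω) P = Measure.map (fun ω i => Z i ω) P)
    (s : 𝒴 → 𝒳 → ℝ) (hs : Measurable fun p : 𝒴 × 𝒳 => s p.1 p.2)
    (α : ℝ) (hα : α ∈ Set.Ioo (0 : ℝ) 1)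
    (k : ℕ) (hk : k = ⌈((n : ℝ) + 1) * (1 - α)⌉₊)
    (q : Ω → EReal)
    (hq : ∀ ω, q ω = if k ≤ n then
      (((((Finset.univ : Finset (Fin n)).val.map
            fun i => s (Z (Fin.castSucc i) ω).2 (Z (Fin.castSucc i) ω).1).sort
          (· ≤ ·)).getD (k - 1) 0 : ℝ) : EReal)
      else (⊤ : EReal)) :
    ENNReal.ofReal (1 - α) ≤
      P {ω | ((s (Z (Fin.last n) ω).2 (Z (Fin.last n) ω).1 : ℝ) : EReal) ≤ q ω} := by
  obtain ⟨hα0, hα1⟩ := hα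
  set S : Fin (n + 1) → Ω → ℝ := fun i ω => s (Z i ω).2 (Z i ω).1 with hS
  have hkpos : 1 ≤ k := by
    rw [hk]
    refine Nat.one_le_iff_ne_zero.mpr (Nat.ceil_pos.mpr ?_).ne'
    have : (0:ℝ) < (n:ℝ) + 1 := by positivity
    nlinarith
  have hkn1 : k ≤ n + 1 := by
    rw [hk]
    refine Nat.ceil_le.mpr ?_
    have h1 : (1:ℝ) - α ≤ 1 := by linarith
    have h2 : (0:ℝ) ≤ (n:ℝ) + 1 := by positivity
    push_cast
    nlinarith
  -- the event as a rank event
  have hsetEq : {ω | ((S (Fin.last n) ω : ℝ) : EReal) ≤ q ω} =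
      {ω | (Finset.univ.filter fun i : Fin (n + 1) => S i ω < S (Fin.last n) ω).card < k} := by
    ext ω
    simp only [Set.mem_setOf_eq, hq ω]
    have hcount : (Finset.univ.filter fun i : Fin (n + 1) => S i ω < S (Fin.last n) ω).card =
        (Finset.univ.filter fun i : Fin n => S (Fin.castSucc i) ω < S (Fin.last n) ω).card := by
      rw [Finset.card_filter, Finset.card_filter, Fin.sum_univ_castSucc]
      simp
    by_cases hkle : k ≤ n
    · simp only [hkle, if_true]
      rw [EReal.coe_le_coe_iff]
      set M : Multiset ℝ := (Finset.univ : Finset (Fin n)).val.map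
        (fun i => s (Z (Fin.castSucc i) ω).2 (Z (Fin.castSucc i) ω).1) with hM
      set L : List ℝ := M.sort (· ≤ ·) with hL
      have hlen : L.length = n := by
        rw [hL, Multiset.length_sort, hM, Multiset.card_map]
        simp
      have hk1n : k - 1 < L.length := by omega
      have hgetD : L.getD (k - 1) 0 = L.get ⟨k - 1, hk1n⟩ := by
        rw [List.getD_eq_getElem (hn := hk1n)]; rfl
      have hsorted : L.Pairwise (· ≤ ·) := Multiset.pairwise_sort _ _
      have hcnt : L.countP (fun a => decide (a < S (Fin.last n) ω)) =
          (Finset.univ.filter fun i : Fin n => S (Fin.castSucc i) ω < S (Fin.last n) ω).card := by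
        have h1 : Multiset.countP (fun a => a < S (Fin.last n) ω) (L : Multiset ℝ) =
            L.countP (fun a => decide (a < S (Fin.last n) ω)) := Multiset.coe_countP _ _
        rw [← h1, hL, Multiset.sort_eq, hM, Multiset.countP_map, Finset.card_def,
          Finset.filter_val]
      have hiff := sorted_get_lt_iff hsorted (x := S (Fin.last n) ω) (k - 1) hk1n
      rw [hgetD]
      constructor
      · intro hle
        rw [hcnt] at hiff
        have hnot : ¬ (L.get ⟨k - 1, hk1n⟩ < S (Fin.last n) ω) := not_lt.mpr hle
        rw [hiff] at hnot
        rw [hcount]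
        omega
      · intro hlt
        rw [hcount] at hlt
        rw [hcnt] at hiff
        by_contra hle
        have hlt2 : L.get ⟨k - 1, hk1n⟩ < S (Fin.last n) ω := lt_of_not_ge hle
        rw [hiff] at hlt2
        omega
    · simp only [hkle, if_false]
      constructor
      · intro _
        have hsub : (Finset.univ.filter fun i : Fin (n + 1) => S i ω < S (Fin.last n) ω) ⊆
            Finset.univ.erase (Fin.last n) := by
          intro i hi
          simp only [Finset.mem_filter, Finset.mem_univ, true_and] at hi
          refine Finset.mem_erase.mpr ⟨?_, Finset.mem_univ _⟩
          rintro rfl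
          exact lt_irrefl _ hi
        have := Finset.card_le_card hsub
        rw [Finset.card_erase_of_mem (Finset.mem_univ _)] at this
        simp only [Finset.card_univ, Fintype.card_fin] at this
        omega
      · intro _
        exact le_top
  rw [hsetEq]
  -- measurability
  have hmeasVi : ∀ i : Fin (n + 1), Measurable fun v : Fin (n + 1) → 𝒳 × 𝒴 => s (v i).2 (v i).1 :=
    fun i => hs.comp ((measurable_pi_apply i).snd.prodMk (measurable_pi_apply i).fst)
  set A : Fin (n + 1) → Set (Fin (n + 1) → 𝒳 × 𝒴) := fun j =>
    {v | (Finset.univ.filter fun i => s (v i).2 (v i).1 < s (v j).2 (v j).1).card < k} with hA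
  have hAmeas : ∀ j, MeasurableSet (A j) := by
    intro j
    have hF : Measurable fun v : Fin (n + 1) → 𝒳 × 𝒴 =>
        (Finset.univ.filter fun i => s (v i).2 (v i).1 < s (v j).2 (v j).1).card := by
      have : (fun v : Fin (n + 1) → 𝒳 × 𝒴 =>
          (Finset.univ.filter fun i => s (v i).2 (v i).1 < s (v j).2 (v j).1).card) =
          fun v => ∑ i : Fin (n + 1), if s (v i).2 (v i).1 < s (v j).2 (v j).1 then 1 else 0 := by
        funext v
        rw [Finset.card_filter]
      rw [this]
      refine Finset.measurable_sum _ fun i _ => ?_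
      exact Measurable.ite (measurableSet_lt (hmeasVi i) (hmeasVi j)) measurable_const
        measurable_const
    exact hF (Set.Iio k).to_countable.measurableSet
  set B : Fin (n + 1) → Set Ω := fun j =>
    {ω | (Finset.univ.filter fun i : Fin (n + 1) => S i ω < S j ω).card < k} with hB
  have hmeasZvec : Measurable (fun ω => fun i => Z i ω) := measurable_pi_lambda _ hZ
  have hBpre : ∀ j, B j = (fun ω => fun i => Z i ω) ⁻¹' A j := fun j => rfl
  have hBmeas : ∀ j, MeasurableSet (B j) := fun j => (hBpre j) ▸ hmeasZvec (hAmeas j)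
  -- exchangeability: all B j have the same measure
  have hswap : ∀ j, P (B j) = P (B (Fin.last n)) := by
    intro j
    set σ : Equiv.Perm (Fin (n + 1)) := Equiv.swap j (Fin.last n) with hσ
    have hmeasσ : Measurable (fun ω => fun i => Z (σ i) ω) :=
      measurable_pi_lambda _ fun i => hZ (σ i)
    have h1 : P ((fun ω => fun i => Z (σ i) ω) ⁻¹' A j) = P ((fun ω => fun i => Z i ω) ⁻¹' A j) := by
      rw [← Measure.map_apply hmeasσ (hAmeas j), ← Measure.map_apply hmeasZvec (hAmeas j), hexch σ]
    have h2 : (fun ω => fun i => Z (σ i) ω) ⁻¹' A j = B (Fin.last n) := by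
      ext ω
      simp only [Set.mem_preimage, hA, Set.mem_setOf_eq, hB]
      have hre : (Finset.univ.filter fun i => S (σ i) ω < S (σ j) ω).card =
          (Finset.univ.filter fun i => S i ω < S (σ j) ω).card := by
        have himg : (Finset.univ.filter fun i => S (σ i) ω < S (σ j) ω) =
            (Finset.univ.filter fun i => S i ω < S (σ j) ω).image σ.symm := by
          ext x
          simp only [Finset.mem_filter, Finset.mem_univ, true_and, Finset.mem_image]
          constructor
          · intro h
            exact ⟨σ x, h, σ.symm_apply_apply x⟩
          · rintro ⟨a, ha, rfl⟩
            rwa [σ.apply_symm_apply]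
        rw [himg, Finset.card_image_of_injective _ σ.symm.injective]
      have hσj : σ j = Fin.last n := Equiv.swap_apply_left _ _
      change (Finset.univ.filter fun i => S (σ i) ω < S (σ j) ω).card < k ↔ _
      rw [hre, hσj]
    rw [hBpre j, ← h1, h2]
  -- counting bound pointwise
  have hpoint : ∀ ω, (k : ℝ≥0∞) ≤ ∑ j : Fin (n + 1), (B j).indicator (1 : Ω → ℝ≥0∞) ω := by
    intro ω
    have hsum : ∑ j : Fin (n + 1), (B j).indicator (1 : Ω → ℝ≥0∞) ω =
        ((Finset.univ.filter fun j : Fin (n + 1) => ω ∈ B j).card : ℝ≥0∞) := by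
      rw [Finset.card_filter]
      push_cast
      refine Finset.sum_congr rfl fun j _ => ?_
      by_cases h : ω ∈ B j <;> simp [Set.indicator, h]
    rw [hsum]
    have := conformal_count_ge (fun i => S i ω) k hkn1
    have hEq : (Finset.univ.filter fun j : Fin (n + 1) => ω ∈ B j) =
        (Finset.univ.filter fun j : Fin (n + 1) =>
          (Finset.univ.filter fun i => S i ω < S j ω).card < k) := rfl
    rw [hEq]
    exact_mod_cast this
  -- integrate
  have hkey : (k : ℝ≥0∞) ≤ (n + 1 : ℝ≥0∞) * P (B (Fin.last n)) := by
    have h1 : (k : ℝ≥0∞) = ∫⁻ _, (k : ℝ≥0∞) ∂P := by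
      rw [lintegral_const, measure_univ, mul_one]
    rw [h1]
    have h2 : ∫⁻ ω, (k : ℝ≥0∞) ∂P ≤ ∫⁻ ω, ∑ j : Fin (n + 1), (B j).indicator (1 : Ω → ℝ≥0∞) ω ∂P :=
      lintegral_mono hpoint
    refine h2.trans ?_
    rw [lintegral_finset_sum (f := fun j ω => (B j).indicator (1 : Ω → ℝ≥0∞) ω) _ (fun j _ => measurable_const.indicator (hBmeas j))]
    have h3 : ∀ j, ∫⁻ ω, (B j).indicator (1 : Ω → ℝ≥0∞) ω ∂P = P (B j) := fun j =>
      lintegral_indicator_one (hBmeas j)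
    simp_rw [h3, hswap]
    rw [Finset.sum_const, Finset.card_univ, Fintype.card_fin, nsmul_eq_mul]
    push_cast
    exact le_rfl
  show ENNReal.ofReal (1 - α) ≤ P (B (Fin.last n))
  have hfin : ENNReal.ofReal (1 - α) * ((n : ℝ≥0∞) + 1) ≤ (k : ℝ≥0∞) := by
    have hle : ((n : ℝ) + 1) * (1 - α) ≤ (k : ℝ) := by
      rw [hk]; exact Nat.le_ceil _
    calc ENNReal.ofReal (1 - α) * ((n : ℝ≥0∞) + 1)
        = ENNReal.ofReal ((1 - α) * ((n : ℝ) + 1)) := by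
          rw [ENNReal.ofReal_mul (by linarith), ENNReal.ofReal_add (by positivity) zero_le_one,
            ENNReal.ofReal_natCast, ENNReal.ofReal_one]
      _ ≤ ENNReal.ofReal (k : ℝ) := ENNReal.ofReal_le_ofReal (by linarith)
      _ = (k : ℝ≥0∞) := ENNReal.ofReal_natCast k
  have hfin2 : ((n : ℝ≥0∞) + 1) * ENNReal.ofReal (1 - α) ≤ ((n : ℝ≥0∞) + 1) * P (B (Fin.last n)) := by
    rw [mul_comm ((n : ℝ≥0∞) + 1) (ENNReal.ofReal (1 - α))]
    exact hfin.trans hkey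
  have hne0 : ((n : ℝ≥0∞) + 1) ≠ 0 := by simp
  have hnetop : ((n : ℝ≥0∞) + 1) ≠ ⊤ :=
    ENNReal.add_ne_top.mpr ⟨ENNReal.natCast_ne_top n, ENNReal.one_ne_top⟩
  exact (ENNReal.mul_le_mul_iff_right hne0 hnetop).mp hfin2
end
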